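/- Let ε ∈ (0,1). Suppose u, v ∈ ℝ² are unit vectors with angle less than ε between u and the positive x-axis direction, and the linear map A : ℝ² → ℝ² satisfies: A maps the unit vector e₁ to a vector of norm in (1−ε, 1+ε) making angle less than ε with u, and maps e₂ to a vector of norm in (1−ε,1+ε) making angle less than ε with the rotation of u by π/2. Then there is a constant C (independent of A, u, ε) such that ‖A − R_θ‖ ≤ Cε for some rotation R_θ, where ‖·‖ is the operator norm; in particular A is ((1−Cε), (1+Cε))-bilipschitz for ε small enough. -/

import Mathlib

/-!
Take the rotation to be multiplication by `u = e^{iθ}`. By the law of cosines and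
`cos t ≥ 1 - t²/2`, a vector `a` with `|‖a‖ - 1| < ε` at angle `< ε` from a unit vector `w`
satisfies `‖a - w‖² ≤ (‖a‖ - 1)² + ‖a‖ ∠(a, w)² ≤ 4ε²`. So `A` and `z ↦ uz` differ by at most
`2ε` at `1` and at `i`, hence by at most `4ε` in operator norm, and a map within `δ` of an
isometry is `(1 - δ, 1 + δ)`-bilipschitz.
-/

open InnerProductGeometry

section AngleChord

variable {V : Type*} [NormedAddCommGroup V] [InnerProductSpace ℝ V]

theorem norm_sub_sq_le_of_norm_eq_one {a w : V} (hw : ‖w‖ = 1) :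
    ‖a - w‖ ^ 2 ≤ (‖a‖ - 1) ^ 2 + ‖a‖ * angle a w ^ 2 := by
  have hinner : inner ℝ a w = ‖a‖ * Real.cos (angle a w) := by
    rw [← cos_angle_mul_norm_mul_norm, hw]; ring
  have hcos : 1 - angle a w ^ 2 / 2 ≤ Real.cos (angle a w) := Real.one_sub_sq_div_two_le_cos
  rw [norm_sub_sq_real, hinner, hw]
  nlinarith [norm_nonneg a]

theorem norm_sub_le_two_mul_of_angle_lt {a w : V} {ε : ℝ} (hw : ‖w‖ = 1) (hε : ε ≤ 2)
    (hnorm : |‖a‖ - 1| < ε) (hangle : angle a w < ε) : ‖a - w‖ ≤ 2 * ε := by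
  have hε0 : 0 < ε := (abs_nonneg _).trans_lt hnorm
  have hsq_norm : (‖a‖ - 1) ^ 2 ≤ ε ^ 2 := sq_le_sq' (abs_lt.1 hnorm).1.le (abs_lt.1 hnorm).2.le
  have hsq_angle : angle a w ^ 2 ≤ ε ^ 2 := pow_le_pow_left₀ (angle_nonneg a w) hangle.le 2
  have ha : ‖a‖ ≤ 1 + ε := by linarith [(abs_lt.1 hnorm).2]
  have hsq : ‖a - w‖ ^ 2 ≤ (2 * ε) ^ 2 :=
    calc ‖a - w‖ ^ 2 ≤ (‖a‖ - 1) ^ 2 + ‖a‖ * angle a w ^ 2 := norm_sub_sq_le_of_norm_eq_one hw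
      _ ≤ ε ^ 2 + (1 + ε) * ε ^ 2 := by gcongr
      _ ≤ (2 * ε) ^ 2 := by nlinarith
  exact (pow_le_pow_iff_left₀ (norm_nonneg _) (by positivity) two_ne_zero).1 hsq

end AngleChord

theorem Complex.arccos_re_mul_re_add_im_mul_im (a w : ℂ) :
    Real.arccos ((a.re * w.re + a.im * w.im) / (‖a‖ * ‖w‖)) = angle a w := by
  rw [angle, Complex.inner]
  simp only [Complex.mul_re, Complex.conj_re, Complex.conj_im]
  ring_nf

theorem ContinuousLinearMap.opNorm_le_norm_apply_one_add_norm_apply_I {E : Type*}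
    [NormedAddCommGroup E] [NormedSpace ℝ E] (B : ℂ →L[ℝ] E) :
    ‖B‖ ≤ ‖B 1‖ + ‖B Complex.I‖ := by
  refine B.opNorm_le_bound (by positivity) fun z => ?_
  have hz : z = z.re • (1 : ℂ) + z.im • Complex.I := by simp [Complex.real_smul]
  calc ‖B z‖ = ‖z.re • B 1 + z.im • B Complex.I‖ := by rw [hz, map_add, map_smul, map_smul]; simp
    _ ≤ |z.re| * ‖B 1‖ + |z.im| * ‖B Complex.I‖ := by
        refine (norm_add_le _ _).trans_eq ?_
        rw [norm_smul, norm_smul, Real.norm_eq_abs, Real.norm_eq_abs]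
    _ ≤ ‖z‖ * ‖B 1‖ + ‖z‖ * ‖B Complex.I‖ := by
        gcongr
        exacts [Complex.abs_re_le_norm z, Complex.abs_im_le_norm z]
    _ = (‖B 1‖ + ‖B Complex.I‖) * ‖z‖ := by ring

theorem ContinuousLinearMap.norm_apply_mem_Icc_of_opNorm_sub_isometry_le {𝕜 E F : Type*}
    [NontriviallyNormedField 𝕜] [NormedAddCommGroup E] [NormedSpace 𝕜 E]
    [NormedAddCommGroup F] [NormedSpace 𝕜 F] {A T : E →L[𝕜] F} {δ : ℝ}
    (hT : ∀ z, ‖T z‖ = ‖z‖) (hδ : ‖A - T‖ ≤ δ) (z : E) :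
    ‖A z‖ ∈ Set.Icc ((1 - δ) * ‖z‖) ((1 + δ) * ‖z‖) := by
  have hclose : ‖A z - T z‖ ≤ δ * ‖z‖ :=
    ((A - T).le_opNorm z).trans (mul_le_mul_of_nonneg_right hδ (norm_nonneg z))
  constructor
  · linarith [norm_sub_norm_le (T z) (A z), norm_sub_rev (T z) (A z), hT z]
  · linarith [norm_sub_norm_le (A z) (T z), hT z]

/-- If a linear map `A : ℝ² → ℝ²` (modelled on `ℂ`) sends the standard orthonormal
frame `(1, i)` to a frame of vectors with norms in `(1-ε, 1+ε)` making angles `< ε`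
with `u` and with `i·u` respectively, where `u` is a unit vector at angle `< ε` from
the positive `x`-axis, then `A` is within operator-norm distance `Cε` of some
rotation `z ↦ e^{iθ} z`, for a universal constant `C`; in particular `A` is
`(1-Cε, 1+Cε)`-bilipschitz when `Cε < 1`.  (Angle between vectors `a, b` is
`arccos(⟨a,b⟩/(‖a‖‖b‖))`.) -/
theorem stmt19 :
    ∃ C : ℝ, 0 < C ∧
      ∀ ε : ℝ, 0 < ε → ε < 1 →
      ∀ u : ℂ, ‖u‖ = 1 →
      Real.arccos u.re < ε →
      ∀ A : ℂ →L[ℝ] ℂ,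
        (1 - ε < ‖A 1‖ ∧ ‖A 1‖ < 1 + ε ∧
          Real.arccos (((A 1).re * u.re + (A 1).im * u.im) / (‖A 1‖ * ‖u‖)) < ε) →
        (1 - ε < ‖A Complex.I‖ ∧ ‖A Complex.I‖ < 1 + ε ∧
          Real.arccos (((A Complex.I).re * (Complex.I * u).re +
              (A Complex.I).im * (Complex.I * u).im) / (‖A Complex.I‖ * ‖Complex.I * u‖)) < ε) →
        ∃ θ : ℝ,
          ‖A - ContinuousLinearMap.mul ℝ ℂ (Complex.exp ((θ : ℂ) * Complex.I))‖ ≤ C * ε ∧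
          (C * ε < 1 → ∀ z : ℂ,
            (1 - C*ε) * ‖z‖ ≤ ‖A z‖ ∧ ‖A z‖ ≤ (1 + C*ε) * ‖z‖) := by
  refine ⟨4, by norm_num, fun ε _ hε1 u hu _ A ⟨h11, h12, h13⟩ ⟨h21, h22, h23⟩ => ⟨u.arg, ?_⟩⟩
  rw [Complex.arccos_re_mul_re_add_im_mul_im] at h13 h23
  have hIu : ‖Complex.I * u‖ = 1 := by rw [norm_mul, Complex.norm_I, hu, one_mul]
  have he1 : ‖A 1 - u‖ ≤ 2 * ε :=
    norm_sub_le_two_mul_of_angle_lt hu (by linarith) (abs_sub_lt_iff.2 ⟨by linarith, by linarith⟩) h13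
  have he2 : ‖A Complex.I - Complex.I * u‖ ≤ 2 * ε :=
    norm_sub_le_two_mul_of_angle_lt hIu (by linarith) (abs_sub_lt_iff.2 ⟨by linarith, by linarith⟩) h23
  have hrot : Complex.exp ((u.arg : ℂ) * Complex.I) = u := by
    simpa [hu] using Complex.norm_mul_exp_arg_mul_I u
  rw [hrot]
  have hdist : ‖A - ContinuousLinearMap.mul ℝ ℂ u‖ ≤ 4 * ε := by
    refine (ContinuousLinearMap.opNorm_le_norm_apply_one_add_norm_apply_I _).trans ?_
    simp only [sub_apply, ContinuousLinearMap.mul_apply', mul_one]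
    rw [mul_comm u]
    linarith
  refine ⟨hdist, fun _ z => ?_⟩
  refine ContinuousLinearMap.norm_apply_mem_Icc_of_opNorm_sub_isometry_le (fun z => ?_) hdist z
  simp [hu]
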